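/- arXiv:2504.17498 — 2 statements merged into one kernel-verified Lean document; each statement's English description precedes it below -/
import Mathlib

section
/- Fix ε, ξ > 0 and an interval [λ₀, λ₁] ⊂ [1/2, 1). There exists a measurable set A ⊆ [λ₀, λ₁] with Lebesgue measure ℒ(A) ≥ λ₁ − λ₀ − ε such that for every λ ∈ A, for ν-almost every sequence i ∈ {0,1}^ℕ, for all sufficiently large n one has ν_λ(B(π_I(σⁿ(i)), λ^{ξn})) ≥ λ^{ξn(1+ε)}. -/
open MeasureTheory Filter Set Real

/-- Projection to the x-coordinate: coding map of the IFS {x ↦ λx, x ↦ λx + (1-λ)}. -/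
noncomputable def piI (lam : ℝ) (i : ℕ → Fin 2) : ℝ :=
  ∑' n : ℕ, ((i n : ℕ) : ℝ) * (1 - lam) * lam ^ n

/-- Coding map of the Przytycki–Urbański IFS f₀(x,y)=(λx,y/2), f₁(x,y)=(λx+1-λ, y/2+1/2). -/
noncomputable def piPU (lam : ℝ) (i : ℕ → Fin 2) : ℝ × ℝ :=
  (piI lam i, ∑' n : ℕ, ((i n : ℕ) : ℝ) * (1 / 2 : ℝ) ^ (n + 1))

/-- Binary digits of a real number: under Lebesgue measure on [0,1) these are
i.i.d. fair coin flips. -/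
noncomputable def digitSeq (x : ℝ) (n : ℕ) : Fin 2 :=
  if ⌊x * 2 ^ (n + 1)⌋ % 2 = 1 then 1 else 0

/-- The (1/2,1/2)-Bernoulli measure on {0,1}^ℕ. -/
noncomputable def bern : Measure (ℕ → Fin 2) :=
  Measure.map digitSeq (volume.restrict (Set.Ico (0 : ℝ) 1))

/-- The Bernoulli convolution ν_λ: push-forward of the Bernoulli measure under π_I. -/
noncomputable def nuLam (lam : ℝ) : Measure ℝ := Measure.map (piI lam) bern

open scoped ENNReal NNReal

/-! ### Auxiliary lemmas -/

lemma measurable_digitSeq : Measurable digitSeq := by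
  apply measurable_pi_lambda
  intro n
  have h : Measurable fun x : ℝ => ⌊x * 2 ^ (n + 1)⌋ :=
    Int.measurable_floor.comp (measurable_id.mul_const _)
  exact (measurable_from_top (f := fun k : ℤ => if k % 2 = 1 then (1 : Fin 2) else 0)).comp h

lemma digitSeq_fract (x : ℝ) (n m : ℕ) :
    digitSeq (Int.fract (2 ^ n * x)) m = digitSeq x (n + m) := by
  unfold digitSeq
  have h1 : Int.fract (2 ^ n * x) * 2 ^ (m + 1)
      = x * 2 ^ (n + m + 1) - ((⌊(2:ℝ) ^ n * x⌋ * 2 ^ (m + 1) : ℤ) : ℝ) := by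
    rw [Int.fract]; push_cast; ring
  have key : ⌊Int.fract (2 ^ n * x) * 2 ^ (m + 1)⌋ % 2 = ⌊x * 2 ^ (n + m + 1)⌋ % 2 := by
    rw [h1, Int.floor_sub_intCast]
    have h2 : (2:ℤ) ∣ ⌊(2:ℝ) ^ n * x⌋ * 2 ^ (m + 1) :=
      Dvd.dvd.mul_left (dvd_pow_self 2 (Nat.succ_ne_zero m)) _
    omega
  rw [key]

lemma map_fract_two :
    Measure.map (fun x => Int.fract (2 * x)) (volume.restrict (Ico (0:ℝ) 1)) =
      volume.restrict (Ico (0:ℝ) 1) := by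
  have hmeas : Measurable fun x : ℝ => Int.fract (2 * x) :=
    measurable_fract.comp (measurable_const_mul 2)
  ext s hs
  rw [Measure.map_apply hmeas hs, Measure.restrict_apply (hmeas hs), Measure.restrict_apply hs]
  have hset : (fun x => Int.fract (2*x)) ⁻¹' s ∩ Ico (0:ℝ) 1 =
      ((fun x : ℝ => 2*x) ⁻¹' (s ∩ Ico 0 1)) ∪ ((fun x : ℝ => 2*x - 1) ⁻¹' (s ∩ Ico 0 1)) := by
    ext x
    simp only [mem_inter_iff, mem_preimage, mem_union, mem_Ico]
    constructor
    · rintro ⟨hxs, hx0, hx1⟩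
      rcases lt_or_ge x (1/2) with h | h
      · left
        have h2 : (2*x) ∈ Ico (0:ℝ) 1 := ⟨by linarith, by linarith⟩
        have := Int.fract_eq_self.mpr ⟨h2.1, h2.2⟩
        exact ⟨by rwa [this] at hxs, h2.1, h2.2⟩
      · right
        have h2 : (2*x - 1) ∈ Ico (0:ℝ) 1 := ⟨by linarith, by linarith⟩
        have e1 : Int.fract (2*x - (1:ℤ)) = Int.fract (2*x) := Int.fract_sub_intCast _ _
        have e2 : Int.fract (2*x - 1) = 2*x - 1 := Int.fract_eq_self.mpr ⟨h2.1, h2.2⟩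
        push_cast at e1
        exact ⟨by rw [← e1, e2] at hxs; exact hxs, h2.1, h2.2⟩
    · rintro (⟨hxs, hx0, hx1⟩ | ⟨hxs, hx0, hx1⟩)
      · have := Int.fract_eq_self.mpr ⟨hx0, hx1⟩
        exact ⟨by rwa [this], by linarith, by linarith⟩
      · have e1 : Int.fract (2*x - (1:ℤ)) = Int.fract (2*x) := Int.fract_sub_intCast _ _
        have e2 : Int.fract (2*x - 1) = 2*x - 1 := Int.fract_eq_self.mpr ⟨hx0, hx1⟩
        push_cast at e1
        refine ⟨?_, by linarith, by linarith⟩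
        rw [← e1, e2]; exact hxs
  rw [hset]
  have hA : MeasurableSet (s ∩ Ico (0:ℝ) 1) := hs.inter measurableSet_Ico
  have hm1 : Measurable fun x : ℝ => 2*x := measurable_const_mul 2
  have hm2 : Measurable fun x : ℝ => 2*x - 1 := hm1.sub_const 1
  have habs : ENNReal.ofReal |(2:ℝ)⁻¹| = ENNReal.ofReal (1/2) := by
    norm_num [abs_of_nonneg]
  have hv1 : volume ((fun x : ℝ => 2*x) ⁻¹' (s ∩ Ico 0 1))
      = ENNReal.ofReal (1/2) * volume (s ∩ Ico (0:ℝ) 1) := by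
    rw [← Measure.map_apply hm1 hA, Real.map_volume_mul_left (two_ne_zero),
      Measure.smul_apply, smul_eq_mul, habs]
  have hv2 : volume ((fun x : ℝ => 2*x - 1) ⁻¹' (s ∩ Ico 0 1))
      = ENNReal.ofReal (1/2) * volume (s ∩ Ico (0:ℝ) 1) := by
    have hc : (fun x : ℝ => 2*x - 1) = (fun y : ℝ => y + (-1)) ∘ (fun x : ℝ => 2*x) := by
      funext x; simp; ring
    rw [hc, preimage_comp, ← Measure.map_apply hm1 ((measurable_add_const (-1)) hA),
      Real.map_volume_mul_left (two_ne_zero)]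
    have : volume ((fun y : ℝ => y + (-1)) ⁻¹' (s ∩ Ico 0 1)) = volume (s ∩ Ico (0:ℝ) 1) :=
      measure_preimage_add_right volume (-1) _
    rw [Measure.smul_apply, smul_eq_mul, this, habs]
  have hdisj : Disjoint ((fun x : ℝ => 2*x) ⁻¹' (s ∩ Ico 0 1))
      ((fun x : ℝ => 2*x - 1) ⁻¹' (s ∩ Ico 0 1)) := by
    apply Set.disjoint_left.mpr
    rintro x ⟨_, _, hb⟩ ⟨_, hc, _⟩
    simp only [mem_Ico] at *
    linarith
  rw [measure_union hdisj (hm2 hA), hv1, hv2, ← add_mul,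
    ← ENNReal.ofReal_add (by norm_num) (by norm_num)]
  norm_num

lemma map_fract_two_pow (n : ℕ) :
    Measure.map (fun x => Int.fract (2 ^ n * x)) (volume.restrict (Ico (0:ℝ) 1)) =
      volume.restrict (Ico (0:ℝ) 1) := by
  induction n with
  | zero =>
    have h : (fun x : ℝ => Int.fract (2 ^ 0 * x)) =ᵐ[volume.restrict (Ico (0:ℝ) 1)] id := by
      filter_upwards [ae_restrict_mem measurableSet_Ico] with x hx
      simp [Int.fract_eq_self.mpr ⟨hx.1, hx.2⟩]
    rw [Measure.map_congr h, Measure.map_id]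
  | succ n ih =>
    have hmn : Measurable fun x : ℝ => Int.fract (2 ^ n * x) :=
      measurable_fract.comp (measurable_const_mul _)
    have hm2 : Measurable fun x : ℝ => Int.fract (2 * x) :=
      measurable_fract.comp (measurable_const_mul 2)
    have hcomp : (fun x : ℝ => Int.fract (2 ^ (n+1) * x)) =
        (fun x => Int.fract (2 * x)) ∘ (fun x => Int.fract (2 ^ n * x)) := by
      funext x
      simp only [Function.comp_apply]
      have h1 : 2 * Int.fract (2 ^ n * x)
          = 2 * (2 ^ n * x) - ((2 * ⌊(2:ℝ) ^ n * x⌋ : ℤ) : ℝ) := by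
        rw [Int.fract]; push_cast; ring
      rw [h1, Int.fract_sub_intCast]
      ring_nf
    rw [hcomp, ← Measure.map_map hm2 hmn, ih, map_fract_two]

lemma measurable_shift (n : ℕ) : Measurable fun (i : ℕ → Fin 2) (m : ℕ) => i (n + m) :=
  measurable_pi_lambda _ fun m => measurable_pi_apply _

lemma bern_shift (n : ℕ) : Measure.map (fun i (m : ℕ) => i (n + m)) bern = bern := by
  rw [bern, Measure.map_map (measurable_shift n) measurable_digitSeq]
  have hcomp : ((fun i (m : ℕ) => i (n + m)) ∘ digitSeq)
      = digitSeq ∘ (fun x => Int.fract (2 ^ n * x)) := by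
    funext x m
    exact (digitSeq_fract x n m).symm
  have hT : Measurable fun x : ℝ => Int.fract (2 ^ n * x) :=
    measurable_fract.comp (measurable_const_mul _)
  rw [hcomp, ← Measure.map_map measurable_digitSeq hT, map_fract_two_pow]

lemma term_nonneg {lam : ℝ} (h0 : 0 ≤ lam) (h1 : lam < 1) (j : Fin 2) (n : ℕ) :
    0 ≤ ((j : ℕ) : ℝ) * (1 - lam) * lam ^ n :=
  mul_nonneg (mul_nonneg (Nat.cast_nonneg _) (by linarith)) (pow_nonneg h0 n)

lemma term_le {lam : ℝ} (h0 : 0 ≤ lam) (h1 : lam < 1) (j : Fin 2) (n : ℕ) :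
    ((j : ℕ) : ℝ) * (1 - lam) * lam ^ n ≤ (1 - lam) * lam ^ n := by
  have h2 : ((j : ℕ) : ℝ) ≤ 1 := by
    have := j.isLt
    exact_mod_cast Nat.lt_succ_iff.mp this
  calc ((j : ℕ) : ℝ) * (1 - lam) * lam ^ n ≤ 1 * (1 - lam) * lam ^ n := by
        apply mul_le_mul_of_nonneg_right _ (pow_nonneg h0 n)
        exact mul_le_mul_of_nonneg_right h2 (by linarith)
    _ = (1 - lam) * lam ^ n := by ring

lemma summable_piI {lam : ℝ} (h0 : 0 ≤ lam) (h1 : lam < 1) (i : ℕ → Fin 2) :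
    Summable fun n => ((i n : ℕ) : ℝ) * (1 - lam) * lam ^ n := by
  apply Summable.of_nonneg_of_le (fun n => ?_) (fun n => ?_)
    ((summable_geometric_of_lt_one h0 h1).mul_left (1 - lam))
  · exact term_nonneg h0 h1 (i n) n
  · exact term_le h0 h1 (i n) n

lemma piI_mem_Icc {lam : ℝ} (h0 : 0 ≤ lam) (h1 : lam < 1) (i : ℕ → Fin 2) :
    piI lam i ∈ Icc (0:ℝ) 1 := by
  constructor
  · exact tsum_nonneg fun n => term_nonneg h0 h1 (i n) n
  · have hle : piI lam i ≤ ∑' n : ℕ, (1 - lam) * lam ^ n := by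
      apply Summable.tsum_le_tsum _ (summable_piI h0 h1 i)
        ((summable_geometric_of_lt_one h0 h1).mul_left (1 - lam))
      exact fun n => term_le h0 h1 (i n) n
    have : ∑' n : ℕ, (1 - lam) * lam ^ n = 1 := by
      rw [tsum_mul_left, tsum_geometric_of_lt_one h0 h1]
      exact div_self (by linarith)
    linarith [hle, this.le, this.ge]

lemma measurable_piI {lam : ℝ} (h0 : 0 ≤ lam) (h1 : lam < 1) : Measurable (piI lam) := by
  apply measurable_of_tendsto_metrizable
    (f := fun N i => ∑ n ∈ Finset.range N, ((i n : ℕ) : ℝ) * (1 - lam) * lam ^ n)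
  · intro N
    apply Finset.measurable_sum
    intro n _
    exact (((measurable_from_top (f := fun j : Fin 2 => ((j : ℕ) : ℝ))).comp
      (measurable_pi_apply n)).mul_const _).mul_const _
  · rw [tendsto_pi_nhds]
    intro i
    exact (summable_piI h0 h1 i).hasSum.tendsto_sum_nat

lemma cover_bound (μ : Measure ℝ) (hconc : μ ((Icc (0:ℝ) 1)ᶜ) = 0) {r ρ : ℝ} (hr : 0 < r) :
    μ {x | μ (Icc (x - r) (x + r)) < ENNReal.ofReal ρ} ≤
      (⌈1/r⌉₊ + 1) * ENNReal.ofReal ρ := by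
  set N := ⌈1/r⌉₊ with hN
  set E := {x | μ (Icc (x - r) (x + r)) < ENNReal.ofReal ρ} with hE
  have hsub : E ⊆ (⋃ j ∈ Finset.range (N+1), E ∩ Icc (j*r) (j*r+r)) ∪ (Icc (0:ℝ) 1)ᶜ := by
    intro x hx
    by_cases hx01 : x ∈ Icc (0:ℝ) 1
    · left
      obtain ⟨hx0, hx1⟩ := hx01
      have hNr : 1 ≤ (N:ℝ) * r := by
        have := Nat.le_ceil (1/r)
        calc (1:ℝ) = (1/r) * r := by field_simp
          _ ≤ (N:ℝ) * r := mul_le_mul_of_nonneg_right this hr.le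
      have hj : (min ⌊x/r⌋₊ N) ∈ Finset.range (N+1) :=
        Finset.mem_range.mpr (Nat.lt_succ_of_le (min_le_right _ _))
      refine mem_biUnion hj (⟨hx, ?_, ?_⟩ : x ∈ _ ∩ Icc _ _)
      · have h1 : ((min ⌊x/r⌋₊ N : ℕ) : ℝ) ≤ x/r := by
          calc ((min ⌊x/r⌋₊ N : ℕ) : ℝ) ≤ (⌊x/r⌋₊ : ℝ) := by
                exact_mod_cast min_le_left _ _
            _ ≤ x/r := Nat.floor_le (div_nonneg hx0 hr.le)
        calc ((min ⌊x/r⌋₊ N : ℕ) : ℝ) * r ≤ (x/r) * r := mul_le_mul_of_nonneg_right h1 hr.le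
          _ = x := by field_simp
      · rcases le_or_gt (⌊x/r⌋₊) N with h | h
        · have hmin : min ⌊x/r⌋₊ N = ⌊x/r⌋₊ := min_eq_left h
          rw [hmin]
          have h2 : x/r < (⌊x/r⌋₊ : ℝ) + 1 := Nat.lt_floor_add_one _
          have h3 : x < ((⌊x/r⌋₊ : ℝ) + 1) * r := by
            calc x = (x/r) * r := by field_simp
              _ < ((⌊x/r⌋₊ : ℝ) + 1) * r := by
                  exact mul_lt_mul_of_pos_right h2 hr
          linarith [h3]
        · have hmin : min ⌊x/r⌋₊ N = N := min_eq_right h.le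
          rw [hmin]
          linarith [hNr, hr.le]
    · right; exact hx01
  calc μ E ≤ μ ((⋃ j ∈ Finset.range (N+1), E ∩ Icc (j*r) (j*r+r)) ∪ (Icc (0:ℝ) 1)ᶜ) :=
        measure_mono hsub
    _ ≤ μ (⋃ j ∈ Finset.range (N+1), E ∩ Icc (j*r) (j*r+r)) + μ ((Icc (0:ℝ) 1)ᶜ) :=
        measure_union_le _ _
    _ = μ (⋃ j ∈ Finset.range (N+1), E ∩ Icc (j*r) (j*r+r)) := by rw [hconc, add_zero]
    _ ≤ ∑ j ∈ Finset.range (N+1), μ (E ∩ Icc (j*r) (j*r+r)) := measure_biUnion_finset_le _ _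
    _ ≤ ∑ j ∈ Finset.range (N+1), ENNReal.ofReal ρ := by
        apply Finset.sum_le_sum
        intro j _
        by_cases hne : (E ∩ Icc ((j:ℝ)*r) ((j:ℝ)*r+r)).Nonempty
        · obtain ⟨x, hxE, hxI⟩ := hne
          have hss : E ∩ Icc ((j:ℝ)*r) ((j:ℝ)*r+r) ⊆ Icc (x-r) (x+r) := by
            intro y hy
            exact ⟨by linarith [hy.2.1, hxI.2], by linarith [hy.2.2, hxI.1]⟩
          exact (measure_mono hss).trans hxE.le
        · rw [not_nonempty_iff_eq_empty] at hne
          rw [hne]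
          simp
    _ = (N + 1) * ENNReal.ofReal ρ := by
        rw [Finset.sum_const, Finset.card_range, nsmul_eq_mul]
        push_cast
        ring

lemma nuLam_compl {lam : ℝ} (h0 : 0 ≤ lam) (h1 : lam < 1) :
    nuLam lam ((Icc (0:ℝ) 1)ᶜ) = 0 := by
  rw [nuLam, Measure.map_apply (measurable_piI h0 h1) measurableSet_Icc.compl]
  have h : (piI lam ⁻¹' (Icc (0:ℝ) 1)ᶜ) = ∅ :=
    eq_empty_of_forall_notMem fun i hi => hi (piI_mem_Icc h0 h1 i)
  rw [h, measure_empty]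

theorem statement3 (ε ξ l0 l1 : ℝ) (hε : 0 < ε) (hξ : 0 < ξ)
    (h0 : (1 / 2 : ℝ) ≤ l0) (h01 : l0 ≤ l1) (h1 : l1 < 1) :
    ∃ A ⊆ Set.Icc l0 l1, MeasurableSet A ∧
      ENNReal.ofReal (l1 - l0 - ε) ≤ volume A ∧
      ∀ lam ∈ A, ∀ᵐ i ∂bern, ∀ᶠ n : ℕ in atTop,
        ENNReal.ofReal (lam ^ (ξ * (n : ℝ) * (1 + ε))) ≤
          nuLam lam (Set.Icc (piI lam (fun m => i (n + m)) - lam ^ (ξ * (n : ℝ)))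
            (piI lam (fun m => i (n + m)) + lam ^ (ξ * (n : ℝ)))) := by
  refine ⟨Set.Icc l0 l1, subset_rfl, measurableSet_Icc, ?_, ?_⟩
  · rw [Real.volume_Icc]
    exact ENNReal.ofReal_le_ofReal (by linarith)
  · intro lam hlam
    obtain ⟨hl0, hl1⟩ := hlam
    have hlpos : 0 < lam := by linarith
    have hlt1 : lam < 1 := lt_of_le_of_lt hl1 h1
    have hl0' : (0:ℝ) ≤ lam := hlpos.le
    set s : ℕ → Set (ℕ → Fin 2) := fun n =>
      {i | nuLam lam (Set.Icc (piI lam (fun m => i (n + m)) - lam ^ (ξ * (n:ℝ)))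
            (piI lam (fun m => i (n + m)) + lam ^ (ξ * (n:ℝ)))) <
          ENNReal.ofReal (lam ^ (ξ * (n:ℝ) * (1 + ε)))} with hs
    have hbound : ∀ n : ℕ, bern (s n) ≤
        ENNReal.ofReal 3 * ENNReal.ofReal (lam ^ (ξ * ε)) ^ n := by
      intro n
      set r : ℝ := lam ^ (ξ * (n:ℝ)) with hrdef
      set ρ : ℝ := lam ^ (ξ * (n:ℝ) * (1 + ε)) with hρdef
      have hr : 0 < r := rpow_pos_of_pos hlpos _
      have hρ0 : 0 < ρ := rpow_pos_of_pos hlpos _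
      set E : Set ℝ := {x | nuLam lam (Set.Icc (x - r) (x + r)) < ENNReal.ofReal ρ} with hEdef
      have hsE : s n = (fun i : ℕ → Fin 2 => piI lam (fun m => i (n + m))) ⁻¹' E := rfl
      have hmapf : Measure.map (fun i : ℕ → Fin 2 => piI lam (fun m => i (n + m))) bern
          = nuLam lam := by
        have hc : (fun i : ℕ → Fin 2 => piI lam (fun m => i (n + m)))
            = piI lam ∘ (fun i (m : ℕ) => i (n + m)) := rfl
        rw [nuLam, hc, ← Measure.map_map (measurable_piI hl0' hlt1) (measurable_shift n),
          bern_shift]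
      have step1 : bern (s n) ≤ nuLam lam E := by
        rw [hsE, ← hmapf]
        exact Measure.le_map_apply
          ((measurable_piI hl0' hlt1).comp (measurable_shift n)).aemeasurable E
      have step2 : nuLam lam E ≤ (⌈1/r⌉₊ + 1) * ENNReal.ofReal ρ :=
        cover_bound _ (nuLam_compl hl0' hlt1) hr
      have step3 : ((⌈1/r⌉₊ : ℝ≥0∞) + 1) * ENNReal.ofReal ρ ≤
          ENNReal.ofReal 3 * ENNReal.ofReal (lam ^ (ξ * ε)) ^ n := by
        have hcast : ((⌈1/r⌉₊ : ℝ≥0∞) + 1) * ENNReal.ofReal ρ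
            = ENNReal.ofReal (((⌈1/r⌉₊ : ℝ) + 1) * ρ) := by
          rw [ENNReal.ofReal_mul (by positivity), ENNReal.ofReal_add (by positivity) zero_le_one]
          norm_num [ENNReal.ofReal_natCast]
        have hrhs : ENNReal.ofReal 3 * ENNReal.ofReal (lam ^ (ξ * ε)) ^ n
            = ENNReal.ofReal (3 * (lam ^ (ξ * ε)) ^ n) := by
          rw [ENNReal.ofReal_mul (by norm_num), ENNReal.ofReal_pow (by positivity)]
        rw [hcast, hrhs]
        apply ENNReal.ofReal_le_ofReal
        have hceil : (⌈1/r⌉₊ : ℝ) < 1/r + 1 := Nat.ceil_lt_add_one (by positivity)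
        have hpow : (lam ^ (ξ * ε)) ^ n = lam ^ (ξ * (n:ℝ) * ε) := by
          rw [← Real.rpow_natCast (lam ^ (ξ * ε)) n, ← Real.rpow_mul hl0']
          ring_nf
        have hinvr : (1/r) * ρ = lam ^ (ξ * (n:ℝ) * ε) := by
          rw [hrdef, hρdef, one_div, ← Real.rpow_neg hl0', ← Real.rpow_add hlpos]
          ring_nf
        have hρle : ρ ≤ lam ^ (ξ * (n:ℝ) * ε) := by
          rw [hρdef]
          apply Real.rpow_le_rpow_of_exponent_ge hlpos hlt1.le
          have hn : (0:ℝ) ≤ ξ * (n:ℝ) := by positivity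
          nlinarith
        have hstep : ((⌈1/r⌉₊ : ℝ) + 1) * ρ ≤ (1/r + 2) * ρ := by nlinarith
        calc ((⌈1/r⌉₊ : ℝ) + 1) * ρ ≤ (1/r + 2) * ρ := hstep
          _ = (1/r) * ρ + 2 * ρ := by ring
          _ ≤ lam ^ (ξ * (n:ℝ) * ε) + 2 * lam ^ (ξ * (n:ℝ) * ε) := by nlinarith [hinvr, hρle]
          _ = 3 * (lam ^ (ξ * ε)) ^ n := by rw [hpow]; ring
      exact step1.trans (step2.trans step3)
    have hsum : (∑' n, bern (s n)) ≠ ⊤ := by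
      have hc1 : ENNReal.ofReal (lam ^ (ξ * ε)) < 1 := by
        rw [ENNReal.ofReal_lt_one]
        exact Real.rpow_lt_one hl0' hlt1 (by positivity)
      have h2 : (∑' n, bern (s n)) ≤
          ∑' n : ℕ, ENNReal.ofReal 3 * ENNReal.ofReal (lam ^ (ξ * ε)) ^ n :=
        ENNReal.tsum_le_tsum hbound
      have h3 : (∑' n : ℕ, ENNReal.ofReal 3 * ENNReal.ofReal (lam ^ (ξ * ε)) ^ n)
          = ENNReal.ofReal 3 * (1 - ENNReal.ofReal (lam ^ (ξ * ε)))⁻¹ := by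
        rw [ENNReal.tsum_mul_left, ENNReal.tsum_geometric]
      apply ne_top_of_le_ne_top _ h2
      rw [h3]
      apply ENNReal.mul_ne_top ENNReal.ofReal_ne_top
      rw [ENNReal.inv_ne_top]
      exact (tsub_pos_of_lt hc1).ne'
    filter_upwards [ae_eventually_notMem hsum] with i hi
    filter_upwards [hi] with n hn
    exact not_lt.mp hn
end

section
/- Let λ ∈ (1/2, 1) and suppose x ∈ [0,1] has a unique λ-expansion, i.e. there is exactly one i ∈ {0,1}^ℕ with x = π_I(i). Let N_k(x) be the number of words j ∈ {0,1}^k whose cylinder image π_I([j]) intersects [x − λ^k, x + λ^k]. Then lim_{k→∞} k^{-1} log N_k(x) = 0. -/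
open MeasureTheory Filter Set Real

variable {lam : ℝ}

lemma digit_le_one (a : Fin 2) : ((a : ℕ) : ℝ) ≤ 1 := by
  have := a.is_le; exact_mod_cast this

lemma digit_nonneg (a : Fin 2) : (0:ℝ) ≤ ((a : ℕ) : ℝ) := by positivity

lemma summable_aux (h0 : 0 < lam) (h2 : lam < 1) (i : ℕ → Fin 2) :
    Summable (fun n => ((i n : ℕ) : ℝ) * (1 - lam) * lam ^ n) := by
  have h1 : (0:ℝ) ≤ 1 - lam := by linarith
  apply Summable.of_nonneg_of_le (fun n => by positivity) (fun n => ?_)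
    (summable_geometric_of_lt_one h0.le h2 |>.mul_left (1 - lam))
  have ha : ((i n : ℕ) : ℝ) ≤ 1 := digit_le_one _
  have hp : (0:ℝ) ≤ lam ^ n := pow_nonneg h0.le n
  calc ((i n : ℕ) : ℝ) * (1 - lam) * lam ^ n ≤ 1 * (1 - lam) * lam ^ n := by
        gcongr
    _ = (1 - lam) * lam ^ n := by ring

lemma piI_nonneg (h0 : 0 < lam) (h2 : lam < 1) (i : ℕ → Fin 2) : 0 ≤ piI lam i := by
  have h1 : (0:ℝ) ≤ 1 - lam := by linarith
  exact tsum_nonneg (fun n => by positivity)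

lemma piI_le_one (h0 : 0 < lam) (h2 : lam < 1) (i : ℕ → Fin 2) : piI lam i ≤ 1 := by
  have h1 : (0:ℝ) ≤ 1 - lam := by linarith
  have hg : ∑' n : ℕ, (1 - lam) * lam ^ n = 1 := by
    rw [tsum_mul_left, tsum_geometric_of_lt_one h0.le h2]
    exact div_self (by linarith)
  calc piI lam i ≤ ∑' n : ℕ, (1 - lam) * lam ^ n := by
        apply Summable.tsum_le_tsum _ (summable_aux h0 h2 i)
          ((summable_geometric_of_lt_one h0.le h2).mul_left (1 - lam))
        intro n
        calc ((i n : ℕ) : ℝ) * (1 - lam) * lam ^ n ≤ 1 * (1 - lam) * lam ^ n := by gcongr; exact digit_le_one _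
          _ = (1 - lam) * lam ^ n := by ring
    _ = 1 := hg

lemma piI_split (h0 : 0 < lam) (h2 : lam < 1) (i : ℕ → Fin 2) (j : ℕ) :
    piI lam i = (∑ m ∈ Finset.range j, ((i m : ℕ) : ℝ) * (1 - lam) * lam ^ m)
      + lam ^ j * piI lam (fun n => i (j + n)) := by
  have hs := summable_aux h0 h2 i
  have h3 := hs.sum_add_tsum_nat_add j
  rw [piI, ← h3]
  congr 1
  rw [piI, ← tsum_mul_left]
  congr 1
  funext n
  show ((i (n+j) : ℕ) : ℝ) * (1 - lam) * lam ^ (n+j) = lam ^ j * (((i (j+n) : ℕ) : ℝ) * (1 - lam) * lam ^ n)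
  rw [add_comm j n, pow_add]
  ring

lemma piI_surj (h1 : 1/2 < lam) (h2 : lam < 1) (y : ℝ) (hy0 : 0 ≤ y) (hy1 : y ≤ 1) :
    ∃ u : ℕ → Fin 2, piI lam u = y := by
  have h0 : (0:ℝ) < lam := by linarith
  set r : ℕ → ℝ := fun n => Nat.rec y
    (fun _ rn => if 1 - lam ≤ rn then (rn - (1-lam))/lam else rn/lam) n with hr
  have hr0 : r 0 = y := rfl
  have hrs : ∀ n, r (n+1) = if 1 - lam ≤ r n then (r n - (1-lam))/lam else r n / lam :=
    fun n => rfl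
  set d : ℕ → Fin 2 := fun n => if 1 - lam ≤ r n then 1 else 0 with hd
  have hbound : ∀ n, 0 ≤ r n ∧ r n ≤ 1 := by
    intro n; induction n with
    | zero => exact ⟨hy0, hy1⟩
    | succ n ih =>
      rw [hrs]
      split_ifs with h
      · exact ⟨div_nonneg (by linarith) h0.le, by rw [div_le_one h0]; linarith [ih.2]⟩
      · exact ⟨div_nonneg ih.1 h0.le, by rw [div_le_one h0]; linarith⟩
  have hpart : ∀ k, (∑ m ∈ Finset.range k, ((d m : ℕ) : ℝ) * (1-lam) * lam ^ m)
      + lam ^ k * r k = y := by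
    intro k; induction k with
    | zero => simpa using hr0.symm ▸ (by simp)
    | succ k ih =>
      rw [Finset.sum_range_succ, pow_succ]
      have hl : lam * r (k+1) = r k - ((d k : ℕ) : ℝ) * (1-lam) := by
        rw [hrs]
        by_cases h : 1 - lam ≤ r k
        · have hdk : d k = 1 := if_pos h
          rw [if_pos h, hdk]
          simp only [Fin.val_one, Nat.cast_one]
          field_simp
        · have hdk : d k = 0 := if_neg h
          rw [if_neg h, hdk]
          simp only [Fin.val_zero, Nat.cast_zero]
          field_simp
          ring
      linear_combination ih + lam ^ k * hl
  have hsum := (summable_aux h0 h2 d).hasSum.tendsto_sum_nat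
  have h2' : Tendsto (fun k : ℕ => (∑ m ∈ Finset.range k,
      ((d m : ℕ) : ℝ) * (1-lam) * lam ^ m)) atTop (nhds y) := by
    have hz : Tendsto (fun k : ℕ => lam ^ k * r k) atTop (nhds 0) := by
      apply squeeze_zero (fun k => mul_nonneg (pow_nonneg h0.le k) (hbound k).1)
        (fun k => ?_) (tendsto_pow_atTop_nhds_zero_of_lt_one h0.le h2)
      calc lam ^ k * r k ≤ lam ^ k * 1 := by
            exact mul_le_mul_of_nonneg_left (hbound k).2 (pow_nonneg h0.le k)
        _ = lam ^ k := mul_one _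
    have : Tendsto (fun k : ℕ => y - lam ^ k * r k) atTop (nhds (y - 0)) :=
      tendsto_const_nhds.sub hz
    rw [sub_zero] at this
    convert this using 2 with k
    linarith [hpart k]
  exact ⟨d, tendsto_nhds_unique hsum h2'⟩

lemma tail_unique (h1 : 1/2 < lam) (h2 : lam < 1)
    (i : ℕ → Fin 2) (x : ℝ) (hix : piI lam i = x)
    (hiu : ∀ u : ℕ → Fin 2, piI lam u = x → u = i) (j : ℕ)
    (u : ℕ → Fin 2) (hu : piI lam u = piI lam (fun n => i (j + n))) :
    u = fun n => i (j + n) := by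
  have h0 : (0:ℝ) < lam := by linarith
  set u' : ℕ → Fin 2 := fun n => if h : n < j then i n else u (n - j) with hu'
  have hx' : piI lam u' = x := by
    rw [piI_split h0 h2 u' j]
    have e1 : ∀ m ∈ Finset.range j, ((u' m : ℕ):ℝ) * (1-lam) * lam ^ m
        = ((i m : ℕ):ℝ) * (1-lam) * lam ^ m := by
      intro m hm
      rw [Finset.mem_range] at hm
      rw [hu']; simp only [dif_pos hm]
    have e2 : (fun n => u' (j + n)) = u := by
      funext n
      rw [hu']
      simp only [dif_neg (by omega : ¬ (j + n < j))]
      congr 1; omega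
    rw [Finset.sum_congr rfl e1, e2, hu, ← piI_split h0 h2 i j, hix]
  have := hiu u' hx'
  funext n
  have h3 : u' (j + n) = i (j + n) := by rw [this]
  rw [hu'] at h3
  simpa [dif_neg (by omega : ¬ (j + n < j)), (by omega : j + n - j = n)] using h3

lemma exclusion (h1 : 1/2 < lam) (h2 : lam < 1)
    (i : ℕ → Fin 2) (x : ℝ) (hix : piI lam i = x)
    (hiu : ∀ u : ℕ → Fin 2, piI lam u = x → u = i) (j : ℕ) :
    (i j = 0 → piI lam (fun n => i (j + n)) < 1 - lam) ∧
    (i j = 1 → lam < piI lam (fun n => i (j + n))) := by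
  have h0 : (0:ℝ) < lam := by linarith
  set t := piI lam (fun n => i (j + n)) with ht
  have ht0 : 0 ≤ t := piI_nonneg h0 h2 _
  have ht1 : t ≤ 1 := piI_le_one h0 h2 _
  constructor
  · intro hij
    by_contra hcon
    push_neg at hcon
    obtain ⟨u, hu⟩ := piI_surj h1 h2 ((t - (1 - lam))/lam)
      (div_nonneg (by linarith) h0.le) (by rw [div_le_one h0]; linarith)
    set u1 : ℕ → Fin 2 := fun n => if n = 0 then 1 else u (n - 1) with hu1
    have key : piI lam u1 = t := by
      rw [piI_split h0 h2 u1 1]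
      have e2 : (fun n => u1 (1 + n)) = u := by
        funext n; rw [hu1]
        simp only [if_neg (by omega : ¬ (1 + n = 0))]
        congr 1; omega
      rw [e2, hu]
      simp only [Finset.sum_range_one, hu1]
      simp only [if_pos rfl, Fin.val_one, Nat.cast_one, pow_zero, pow_one]
      field_simp
      simp only [↓reduceIte, Fin.val_one, Nat.cast_one, one_mul]
      ring
    have := tail_unique h1 h2 i x hix hiu j u1 key
    have h4 : u1 0 = i (j + 0) := by rw [this]
    have h5 : u1 0 = 1 := by simp [hu1]
    rw [Nat.add_zero, hij, h5] at h4
    exact absurd h4 (by decide)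
  · intro hij
    by_contra hcon
    push_neg at hcon
    obtain ⟨u, hu⟩ := piI_surj h1 h2 (t/lam)
      (div_nonneg ht0 h0.le) (by rw [div_le_one h0]; linarith)
    set u0 : ℕ → Fin 2 := fun n => if n = 0 then 0 else u (n - 1) with hu0
    have key : piI lam u0 = t := by
      rw [piI_split h0 h2 u0 1]
      have e2 : (fun n => u0 (1 + n)) = u := by
        funext n; rw [hu0]
        simp only [if_neg (by omega : ¬ (1 + n = 0))]
        congr 1; omega
      rw [e2, hu]
      simp only [Finset.sum_range_one, hu0]
      simp only [if_pos rfl, Fin.val_zero, Nat.cast_zero, pow_one]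
      field_simp
      simp only [↓reduceIte, Fin.val_zero, Nat.cast_zero, zero_mul, zero_add]
    have := tail_unique h1 h2 i x hix hiu j u0 key
    have h4 : u0 0 = i (j + 0) := by rw [this]
    have h5 : u0 0 = 0 := by simp [hu0]
    rw [Nat.add_zero, hij, h5] at h4
    exact absurd h4 (by decide)

lemma geo_sum (h0 : (0:ℝ) < lam) (h2 : lam < 1) (K : ℕ) :
    ∑ m ∈ Finset.range K, (1-lam) * lam ^ m = 1 - lam ^ K := by
  induction K with
  | zero => simp
  | succ K ih => rw [Finset.sum_range_succ, ih, pow_succ]; ring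

set_option maxHeartbeats 1000000 in
lemma rigidity (h1 : 1/2 < lam) (h2 : lam < 1)
    (i : ℕ → Fin 2) (x : ℝ) (hix : piI lam i = x)
    (hiu : ∀ u : ℕ → Fin 2, piI lam u = x → u = i)
    (C : ℕ) (hC : lam ^ C < (1 - lam)/2)
    (k : ℕ) (W : ℕ → Fin 2)
    (hS : |(∑ m ∈ Finset.range k, ((W m : ℕ):ℝ) * (1-lam) * lam ^ m) - x| ≤ 2 * lam ^ k)
    (j : ℕ) (hjk : j < k) (hj : W j ≠ i j) (hjmin : ∀ m, m < j → W m = i m) :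
    ∃ ε : Fin 2, ∀ p, j < p → p + C < k → W p = ε := by
  have h0 : (0:ℝ) < lam := by linarith
  have h1m : (0:ℝ) ≤ 1 - lam := by linarith
  have h01 : ∀ a : Fin 2, a = 0 ∨ a = 1 := by decide
  set K := k - j - 1 with hK
  have hkeq : k = (j + 1) + K := by omega
  set T := ∑ m ∈ Finset.range K, ((W (j+1+m) : ℕ):ℝ) * (1-lam) * lam ^ m with hT
  have hTnn : 0 ≤ T := by
    rw [hT]
    exact Finset.sum_nonneg (fun m _ =>
      mul_nonneg (mul_nonneg (digit_nonneg _) h1m) (pow_nonneg h0.le m))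
  have hSdec : (∑ m ∈ Finset.range k, ((W m : ℕ):ℝ) * (1-lam) * lam ^ m)
      = (∑ m ∈ Finset.range j, ((W m : ℕ):ℝ) * (1-lam) * lam ^ m)
        + ((W j : ℕ):ℝ) * (1-lam) * lam ^ j + lam ^ (j+1) * T := by
    have e0 : ∀ m : ℕ, ((W (j+1+m) : ℕ):ℝ) * (1-lam) * lam ^ (j+1+m)
        = lam ^ (j+1) * (((W (j+1+m) : ℕ):ℝ) * (1-lam) * lam ^ m) := by
      intro m; rw [pow_add]; ring
    rw [hT, hkeq, Finset.sum_range_add, Finset.sum_range_succ]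
    simp only [e0]
    rw [← Finset.mul_sum]
  set t := piI lam (fun n => i ((j+1) + n)) with htdef
  have ht0 : 0 ≤ t := piI_nonneg h0 h2 _
  have ht1 : t ≤ 1 := piI_le_one h0 h2 _
  have hxdec : x = (∑ m ∈ Finset.range j, ((i m : ℕ):ℝ) * (1-lam) * lam ^ m)
      + ((i j : ℕ):ℝ) * (1-lam) * lam ^ j + lam ^ (j+1) * t := by
    have e1 := piI_split h0 h2 i (j+1)
    rw [Finset.sum_range_succ] at e1
    rw [← hix, e1, htdef, add_assoc]
  have hstep : piI lam (fun n => i (j + n)) = ((i j : ℕ):ℝ) * (1-lam) + lam * t := by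
    have e1 := piI_split h0 h2 (fun n => i (j + n)) 1
    have e2 : (fun n => i (j + (1 + n))) = (fun n => i ((j+1) + n)) := by
      funext n; congr 1; omega
    rw [e2] at e1
    simpa [htdef] using e1
  have hpre : (∑ m ∈ Finset.range j, ((W m : ℕ):ℝ) * (1-lam) * lam ^ m)
      = ∑ m ∈ Finset.range j, ((i m : ℕ):ℝ) * (1-lam) * lam ^ m := by
    apply Finset.sum_congr rfl
    intro m hm
    rw [Finset.mem_range] at hm
    rw [hjmin m hm]
  have hdiff : |((W j : ℕ):ℝ) * (1-lam) * lam ^ j - ((i j : ℕ):ℝ) * (1-lam) * lam ^ j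
      + lam ^ (j+1) * T - lam ^ (j+1) * t| ≤ 2 * lam ^ k := by
    have e3 : ((W j : ℕ):ℝ) * (1-lam) * lam ^ j - ((i j : ℕ):ℝ) * (1-lam) * lam ^ j
        + lam ^ (j+1) * T - lam ^ (j+1) * t
        = (∑ m ∈ Finset.range k, ((W m : ℕ):ℝ) * (1-lam) * lam ^ m) - x := by
      rw [hSdec, hxdec, hpre]; ring
    rw [e3]; exact hS
  have hexcl := exclusion h1 h2 i x hix hiu j
  have hkpow : (lam:ℝ) ^ k = lam ^ (j+1) * lam ^ K := by rw [hkeq, pow_add]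
  rcases h01 (i j) with hij | hij
  · -- i j = 0, W j = 1, later digits are 0
    have hWj : W j = 1 := by
      rcases h01 (W j) with h | h
      · exact absurd (h.trans hij.symm) hj
      · exact h
    have hlt : lam * t < 1 - lam := by
      have h4 := hexcl.1 hij
      rw [hstep, hij] at h4
      simpa using h4
    have key1 : (1-lam) * lam ^ j + lam ^ (j+1) * T - lam ^ (j+1) * t ≤ 2 * lam ^ k := by
      have h5 := le_trans (le_abs_self _) hdiff
      rw [hWj, hij] at h5
      simp only [Fin.val_one, Fin.val_zero, Nat.cast_one, Nat.cast_zero] at h5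
      linarith
    have hAt : lam ^ (j+1) * t < (1-lam) * lam ^ j := by
      have h6 := mul_lt_mul_of_pos_left hlt (pow_pos h0 j)
      calc lam ^ (j+1) * t = lam ^ j * (lam * t) := by rw [pow_succ]; ring
        _ < lam ^ j * (1 - lam) := h6
        _ = (1-lam) * lam ^ j := by ring
    have hTsmall : T < 2 * lam ^ K := by
      have h5 : lam ^ (j+1) * T < lam ^ (j+1) * (2 * lam ^ K) := by
        rw [← mul_assoc, mul_comm (lam ^ (j+1)) 2, mul_assoc, ← hkpow]
        linarith
      exact lt_of_mul_lt_mul_left h5 (pow_pos h0 (j+1)).le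
    refine ⟨0, fun p hp1 hp2 => ?_⟩
    by_contra hcon
    have hWp : W p = 1 := by
      rcases h01 (W p) with h | h
      · exact absurd h hcon
      · exact h
    set m0 := p - (j+1) with hm0
    have hpm : j + 1 + m0 = p := by omega
    have hm0K : m0 ∈ Finset.range K := Finset.mem_range.mpr (by omega)
    have hterm : (1-lam) * lam ^ m0 ≤ T := by
      have h6 := Finset.single_le_sum
        (f := fun m => ((W (j+1+m) : ℕ):ℝ) * (1-lam) * lam ^ m)
        (fun m _ => mul_nonneg (mul_nonneg (digit_nonneg _) h1m) (pow_nonneg h0.le m)) hm0K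
      simp only [hpm, hWp, Fin.val_one, Nat.cast_one, one_mul] at h6
      rw [hT]
      exact h6
    have hmono : lam ^ K ≤ lam ^ (m0+C+1) :=
      pow_le_pow_of_le_one h0.le h2.le (by omega)
    have hc1 : (1-lam) * lam ^ m0 < (2 * lam ^ C * lam) * lam ^ m0 := by
      have e9 : (2:ℝ) * lam ^ (m0+C+1) = (2 * lam ^ C * lam) * lam ^ m0 := by
        rw [pow_add, pow_add]; ring
      calc (1-lam) * lam ^ m0 ≤ T := hterm
        _ < 2 * lam ^ K := hTsmall
        _ ≤ 2 * lam ^ (m0+C+1) := by linarith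
        _ = (2 * lam ^ C * lam) * lam ^ m0 := e9
    have hc2 : (1-lam) < 2 * lam ^ C * lam :=
      lt_of_mul_lt_mul_right hc1 (pow_nonneg h0.le m0)
    nlinarith [pow_pos h0 C]
  · -- i j = 1, W j = 0, later digits are 1
    have hWj : W j = 0 := by
      rcases h01 (W j) with h | h
      · exact h
      · exact absurd (h.trans hij.symm) hj
    have hlt : 2 * lam - 1 < lam * t := by
      have h4 := hexcl.2 hij
      rw [hstep, hij] at h4
      simp only [Fin.val_one, Nat.cast_one, one_mul] at h4
      linarith
    have key1 : (1-lam) * lam ^ j + lam ^ (j+1) * t - lam ^ (j+1) * T ≤ 2 * lam ^ k := by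
      have h5 := le_trans (neg_le_abs _) hdiff
      rw [hWj, hij] at h5
      simp only [Fin.val_one, Fin.val_zero, Nat.cast_one, Nat.cast_zero] at h5
      linarith
    have hAt : (2 * lam - 1) * lam ^ j < lam ^ (j+1) * t := by
      have h6 := mul_lt_mul_of_pos_left hlt (pow_pos h0 j)
      calc (2 * lam - 1) * lam ^ j = lam ^ j * (2 * lam - 1) := by ring
        _ < lam ^ j * (lam * t) := h6
        _ = lam ^ (j+1) * t := by rw [pow_succ]; ring
    have hTbig : 1 - 2 * lam ^ K < T := by
      have h5 : lam ^ (j+1) * (1 - 2 * lam ^ K) < lam ^ (j+1) * T := by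
        have e3 : lam ^ (j+1) * (1 - 2 * lam ^ K) = lam * lam ^ j - 2 * lam ^ k := by
          rw [hkpow, pow_succ]; ring
        rw [e3]
        linarith
      exact lt_of_mul_lt_mul_left h5 (pow_pos h0 (j+1)).le
    refine ⟨1, fun p hp1 hp2 => ?_⟩
    by_contra hcon
    have hWp : W p = 0 := by
      rcases h01 (W p) with h | h
      · exact h
      · exact absurd h hcon
    set m0 := p - (j+1) with hm0
    have hpm : j + 1 + m0 = p := by omega
    have hm0K : m0 ∈ Finset.range K := Finset.mem_range.mpr (by omega)
    have e6 : ((W (j+1+m0) : ℕ):ℝ) * (1-lam) * lam ^ m0 = 0 := by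
      rw [hpm, hWp]; simp
    have e4 : (∑ m ∈ (Finset.range K).erase m0,
        ((W (j+1+m) : ℕ):ℝ) * (1-lam) * lam ^ m) = T := by
      rw [hT, ← Finset.sum_erase_add (Finset.range K)
        (fun m => ((W (j+1+m) : ℕ):ℝ) * (1-lam) * lam ^ m) hm0K]
      simp only [e6, add_zero]
    have e5 : (∑ m ∈ (Finset.range K).erase m0, (1-lam) * lam ^ m) + (1-lam) * lam ^ m0
        = 1 - lam ^ K := by
      rw [Finset.sum_erase_add (Finset.range K) (fun m => (1-lam) * lam ^ m) hm0K]
      exact geo_sum h0 h2 K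
    have e7 : (∑ m ∈ (Finset.range K).erase m0,
        ((W (j+1+m) : ℕ):ℝ) * (1-lam) * lam ^ m)
        ≤ ∑ m ∈ (Finset.range K).erase m0, (1-lam) * lam ^ m := by
      apply Finset.sum_le_sum
      intro m hm
      have h7 := mul_le_mul_of_nonneg_right
        (mul_le_mul_of_nonneg_right (digit_le_one (W (j+1+m))) h1m) (pow_nonneg h0.le m)
      simpa using h7
    have hterm : T ≤ 1 - lam ^ K - (1-lam) * lam ^ m0 := by
      rw [← e4]
      linarith
    have hmono : lam ^ K ≤ lam ^ (m0+C+1) :=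
      pow_le_pow_of_le_one h0.le h2.le (by omega)
    have hc1 : (1-lam) * lam ^ m0 < (lam ^ C * lam) * lam ^ m0 := by
      have e9 : (lam:ℝ) ^ (m0+C+1) = (lam ^ C * lam) * lam ^ m0 := by
        rw [pow_add, pow_add]; ring
      calc (1-lam) * lam ^ m0 ≤ 1 - lam ^ K - T := by linarith
        _ < lam ^ K := by linarith
        _ ≤ lam ^ (m0+C+1) := hmono
        _ = (lam ^ C * lam) * lam ^ m0 := e9
    have hc2 : (1-lam) < lam ^ C * lam :=
      lt_of_mul_lt_mul_right hc1 (pow_nonneg h0.le m0)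
    nlinarith [pow_pos h0 C]

def Wext (k : ℕ) (w : Fin k → Fin 2) : ℕ → Fin 2 :=
  fun n => if h : n < k then w ⟨n, h⟩ else 0

lemma Wext_lt {k : ℕ} (w : Fin k → Fin 2) (m : Fin k) : Wext k w m = w m := by
  simp [Wext, m.isLt]

open Classical in
noncomputable def code (i : ℕ → Fin 2) (C k : ℕ) (w : Fin k → Fin 2) :
    Option (Fin k × Fin 2 × (Fin C → Fin 2)) :=
  if h : ∃ n, n < k ∧ Wext k w n ≠ i n then
    some (⟨Nat.find h, (Nat.find_spec h).1⟩, Wext k w (k - C - 1),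
      fun c => Wext k w (k - C + c))
  else none

set_option maxHeartbeats 1000000 in
lemma count_bound (h1 : 1/2 < lam) (h2 : lam < 1) (i : ℕ → Fin 2) (x : ℝ)
    (hix : piI lam i = x) (hiu : ∀ u : ℕ → Fin 2, piI lam u = x → u = i)
    (C : ℕ) (hC : lam ^ C < (1 - lam)/2) (k : ℕ) (hk : C < k) :
    Nat.card {w : Fin k → Fin 2 //
      (Set.Icc (∑ m : Fin k, ((w m : ℕ) : ℝ) * (1 - lam) * lam ^ (m : ℕ))
          ((∑ m : Fin k, ((w m : ℕ) : ℝ) * (1 - lam) * lam ^ (m : ℕ)) + lam ^ k) ∩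
        Set.Icc (x - lam ^ k) (x + lam ^ k)).Nonempty}
      ≤ 1 + k * (2 * 2 ^ C) := by
  classical
  have h0 : (0:ℝ) < lam := by linarith
  have h01 : ∀ a b c : Fin 2, a ≠ c → b ≠ c → a = b := by decide
  have hsum_eq : ∀ w : Fin k → Fin 2,
      (∑ m : Fin k, ((w m : ℕ) : ℝ) * (1 - lam) * lam ^ (m : ℕ))
        = ∑ m ∈ Finset.range k, ((Wext k w m : ℕ):ℝ) * (1-lam) * lam ^ m := by
    intro w
    rw [← Fin.sum_univ_eq_sum_range (fun n => ((Wext k w n : ℕ):ℝ) * (1-lam) * lam ^ n) k]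
    apply Finset.sum_congr rfl
    intro m _
    rw [Wext_lt]
  have key : ∀ w : Fin k → Fin 2,
      (Set.Icc (∑ m : Fin k, ((w m : ℕ) : ℝ) * (1 - lam) * lam ^ (m : ℕ))
          ((∑ m : Fin k, ((w m : ℕ) : ℝ) * (1 - lam) * lam ^ (m : ℕ)) + lam ^ k) ∩
        Set.Icc (x - lam ^ k) (x + lam ^ k)).Nonempty →
      |(∑ m ∈ Finset.range k, ((Wext k w m : ℕ):ℝ) * (1-lam) * lam ^ m) - x|
        ≤ 2 * lam ^ k := by
    intro w hw
    obtain ⟨y, ⟨hy1, hy2⟩, hy3, hy4⟩ := hw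
    rw [← hsum_eq w]
    have hp : (0:ℝ) ≤ lam ^ k := (pow_pos h0 k).le
    rw [abs_le]
    constructor <;> linarith
  have inj : Function.Injective (fun a : {w : Fin k → Fin 2 //
      (Set.Icc (∑ m : Fin k, ((w m : ℕ) : ℝ) * (1 - lam) * lam ^ (m : ℕ))
          ((∑ m : Fin k, ((w m : ℕ) : ℝ) * (1 - lam) * lam ^ (m : ℕ)) + lam ^ k) ∩
        Set.Icc (x - lam ^ k) (x + lam ^ k)).Nonempty} => code i C k a.val) := by
    rintro ⟨w, hw⟩ ⟨w', hw'⟩ hcode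
    simp only [code] at hcode
    by_cases hex : ∃ n, n < k ∧ Wext k w n ≠ i n
    · by_cases hex' : ∃ n, n < k ∧ Wext k w' n ≠ i n
      · rw [dif_pos hex, dif_pos hex'] at hcode
        have heq := Option.some.inj hcode
        have heq1 : (⟨Nat.find hex, (Nat.find_spec hex).1⟩ : Fin k)
            = ⟨Nat.find hex', (Nat.find_spec hex').1⟩ := congrArg Prod.fst heq
        have hj : Nat.find hex = Nat.find hex' := Fin.mk.inj_iff.mp heq1
        have heq2 : Wext k w (k - C - 1) = Wext k w' (k - C - 1) :=
          congrArg (fun z => z.2.1) heq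
        have heq3 : ∀ c : Fin C, Wext k w (k - C + c) = Wext k w' (k - C + c) :=
          fun c => congrFun (congrArg (fun z => z.2.2) heq) c
        set j := Nat.find hex with hjdef
        have hspec := Nat.find_spec hex
        have hspec' := Nat.find_spec hex'
        rw [← hj] at hspec'
        have hmin : ∀ m, m < j → Wext k w m = i m := by
          intro m hm
          have := Nat.find_min hex hm
          push_neg at this
          exact this (by omega)
        have hmin' : ∀ m, m < j → Wext k w' m = i m := by
          intro m hm
          have := Nat.find_min hex' (hj ▸ hm)
          push_neg at this
          exact this (by omega)
        obtain ⟨e1, he1⟩ := rigidity h1 h2 i x hix hiu C hC k (Wext k w)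
          (key w hw) j hspec.1 hspec.2 hmin
        obtain ⟨e2, he2⟩ := rigidity h1 h2 i x hix hiu C hC k (Wext k w')
          (key w' hw') j hspec'.1 hspec'.2 hmin'
        apply Subtype.ext
        funext m
        rcases lt_trichotomy (m : ℕ) j with hmj | hmj | hmj
        · have a1 := hmin m hmj
          have a2 := hmin' m hmj
          rw [Wext_lt] at a1 a2
          show w m = w' m
          rw [a1, a2]
        · have a1 : Wext k w m ≠ i m := by rw [hmj]; exact hspec.2
          have a2 : Wext k w' m ≠ i m := by rw [hmj]; exact hspec'.2
          rw [Wext_lt] at a1 a2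
          exact h01 _ _ _ a1 a2
        · by_cases hmC : (m : ℕ) + C < k
          · -- middle zone: constant digits; pin down e1 = e2 via position k - C - 1
            have hmid : j < k - C - 1 ∨ (m:ℕ) = k - C - 1 ∨ (m:ℕ) < k - C - 1 := by omega
            have hpos : j < k - C - 1 ∧ (k - C - 1) + C < k := by omega
            have b1 := he1 (k - C - 1) hpos.1 hpos.2
            have b2 := he2 (k - C - 1) hpos.1 hpos.2
            have hee : e1 = e2 := by rw [← b1, ← b2, heq2]
            have c1 := he1 m hmj hmC
            have c2 := he2 m hmj hmC
            rw [Wext_lt] at c1 c2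
            show w m = w' m
            rw [c1, c2, hee]
          · -- suffix zone
            have hc : (m : ℕ) + C - k < C := by omega
            have := heq3 ⟨(m : ℕ) + C - k, hc⟩
            have harith : k - C + ((m : ℕ) + C - k) = (m : ℕ) := by omega
            rw [harith, Wext_lt, Wext_lt] at this
            exact this
      · rw [dif_pos hex, dif_neg hex'] at hcode
        exact absurd hcode (by simp)
    · by_cases hex' : ∃ n, n < k ∧ Wext k w' n ≠ i n
      · rw [dif_neg hex, dif_pos hex'] at hcode
        exact absurd hcode (by simp)
      · push_neg at hex hex'
        apply Subtype.ext
        funext m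
        have a1 := hex m m.isLt
        have a2 := hex' m m.isLt
        rw [Wext_lt] at a1 a2
        show w m = w' m
        rw [a1, a2]
  calc Nat.card _ ≤ Nat.card (Option (Fin k × Fin 2 × (Fin C → Fin 2))) :=
        Nat.card_le_card_of_injective _ inj
    _ = 1 + k * (2 * 2 ^ C) := by
        simp [Nat.card_eq_fintype_card]
        ring

noncomputable def Ncard (lam x : ℝ) (k : ℕ) : ℕ :=
  Nat.card {w : Fin k → Fin 2 //
    (Set.Icc (∑ m : Fin k, ((w m : ℕ) : ℝ) * (1 - lam) * lam ^ (m : ℕ))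
        ((∑ m : Fin k, ((w m : ℕ) : ℝ) * (1 - lam) * lam ^ (m : ℕ)) + lam ^ k) ∩
      Set.Icc (x - lam ^ k) (x + lam ^ k)).Nonempty}

theorem statement10 (lam : ℝ) (hlam : lam ∈ Set.Ioo (1 / 2 : ℝ) 1) (x : ℝ)
    (hx : ∃! i : ℕ → Fin 2, piI lam i = x) :
    Tendsto (fun k : ℕ =>
        Real.log (Nat.card {w : Fin k → Fin 2 //
          (Set.Icc (∑ m : Fin k, ((w m : ℕ) : ℝ) * (1 - lam) * lam ^ (m : ℕ))
              ((∑ m : Fin k, ((w m : ℕ) : ℝ) * (1 - lam) * lam ^ (m : ℕ)) + lam ^ k) ∩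
            Set.Icc (x - lam ^ k) (x + lam ^ k)).Nonempty}) / k)
      atTop (nhds 0) := by
  obtain ⟨h1, h2⟩ := hlam
  have h0 : (0:ℝ) < lam := by linarith
  obtain ⟨i, hix, hiu'⟩ := hx
  have hiu : ∀ u : ℕ → Fin 2, piI lam u = x → u = i := fun u hu => hiu' u hu
  obtain ⟨C, hC⟩ : ∃ C : ℕ, lam ^ C < (1 - lam)/2 :=
    exists_pow_lt_of_lt_one (by linarith) h2
  show Tendsto (fun k : ℕ => Real.log (Ncard lam x k) / k) atTop (nhds 0)
  have hNle : ∀ k, Ncard lam x k ≤ 2 ^ C + k * (2 * 2 ^ C) := by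
    intro k
    by_cases hk : C < k
    · have hcb := count_bound h1 h2 i x hix hiu C hC k hk
      have h1C : 1 ≤ 2 ^ C := Nat.one_le_two_pow
      have hcb2 : Ncard lam x k ≤ 1 + k * (2 * 2 ^ C) := hcb
      clear hcb
      omega
    · have htr : Ncard lam x k ≤ 2 ^ k := by
        calc Ncard lam x k
            ≤ Nat.card (Fin k → Fin 2) :=
              Nat.card_le_card_of_injective _ Subtype.val_injective
          _ = 2 ^ k := by simp [Nat.card_eq_fintype_card]
      have : (2:ℕ) ^ k ≤ 2 ^ C := Nat.pow_le_pow_right (by norm_num) (by omega)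
      omega
  have hNge : ∀ k, 1 ≤ Ncard lam x k := by
    intro k
    have hxk : 0 ≤ piI lam (fun n => i (k + n)) := piI_nonneg h0 h2 _
    have hxk1 : piI lam (fun n => i (k + n)) ≤ 1 := piI_le_one h0 h2 _
    have hsplit := piI_split h0 h2 i k
    have hsum_eq : (∑ m : Fin k, ((i (m:ℕ) : ℕ) : ℝ) * (1 - lam) * lam ^ (m : ℕ))
        = ∑ m ∈ Finset.range k, ((i m : ℕ):ℝ) * (1-lam) * lam ^ m :=
      Fin.sum_univ_eq_sum_range (fun n => ((i n : ℕ):ℝ) * (1-lam) * lam ^ n) k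
    have hpk : (0:ℝ) ≤ lam ^ k := (pow_pos h0 k).le
    have hxkk : (0:ℝ) ≤ lam ^ k * piI lam (fun n => i (k + n)) := by positivity
    have hxkk1 : lam ^ k * piI lam (fun n => i (k + n)) ≤ lam ^ k := by
      calc lam ^ k * piI lam (fun n => i (k + n)) ≤ lam ^ k * 1 := by gcongr
        _ = lam ^ k := mul_one _
    have hxq : x = (∑ m ∈ Finset.range k, ((i m : ℕ):ℝ) * (1-lam) * lam ^ m)
        + lam ^ k * piI lam (fun n => i (k + n)) := by rw [← hix, hsplit]
    have hmem : x ∈ (Set.Icc (∑ m : Fin k, ((i (m:ℕ) : ℕ) : ℝ) * (1 - lam) * lam ^ (m : ℕ))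
        ((∑ m : Fin k, ((i (m:ℕ) : ℕ) : ℝ) * (1 - lam) * lam ^ (m : ℕ)) + lam ^ k) ∩
        Set.Icc (x - lam ^ k) (x + lam ^ k)) := by
      rw [hsum_eq]
      exact ⟨⟨by linarith, by linarith⟩, by constructor <;> linarith⟩
    have hne : Nonempty {w : Fin k → Fin 2 //
        (Set.Icc (∑ m : Fin k, ((w m : ℕ) : ℝ) * (1 - lam) * lam ^ (m : ℕ))
            ((∑ m : Fin k, ((w m : ℕ) : ℝ) * (1 - lam) * lam ^ (m : ℕ)) + lam ^ k) ∩
          Set.Icc (x - lam ^ k) (x + lam ^ k)).Nonempty} :=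
      ⟨⟨fun m => i (m : ℕ), ⟨x, hmem⟩⟩⟩
    exact Nat.one_le_iff_ne_zero.mpr (Nat.card_pos (α := _)).ne'
  set A : ℝ := 3 * 2 ^ C with hA
  have hApos : (0:ℝ) < A := by positivity
  have hNA : ∀ k : ℕ, ((Ncard lam x k : ℝ)) ≤ A * ((k:ℝ) + 1) := by
    intro k
    have hcast : ((Ncard lam x k : ℝ)) ≤ (2:ℝ) ^ C + (k:ℝ) * (2 * 2 ^ C) := by
      exact_mod_cast Nat.cast_le.mpr (hNle k)
    have h2C : (0:ℝ) ≤ (2:ℝ) ^ C := by positivity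
    rw [hA]
    nlinarith [Nat.cast_nonneg (α := ℝ) k]
  have upper : Tendsto (fun k : ℕ => (Real.log A + Real.log ((k:ℝ)+1)) / (k:ℝ))
      atTop (nhds 0) := by
    apply Asymptotics.IsLittleO.tendsto_div_nhds_zero
    apply Asymptotics.IsLittleO.add
    · exact (Asymptotics.isLittleO_const_id_atTop (Real.log A)).comp_tendsto
        tendsto_natCast_atTop_atTop
    · have o1 : (fun k : ℕ => Real.log ((k:ℝ)+1)) =o[atTop] (fun k : ℕ => (k:ℝ)+1) :=
        Real.isLittleO_log_id_atTop.comp_tendsto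
          (tendsto_atTop_add_const_right _ 1 tendsto_natCast_atTop_atTop)
      apply o1.trans_isBigO
      rw [Asymptotics.isBigO_iff]
      refine ⟨2, ?_⟩
      filter_upwards [eventually_ge_atTop 1] with k hk
      have : (1:ℝ) ≤ (k:ℝ) := by exact_mod_cast hk
      rw [Real.norm_eq_abs, Real.norm_eq_abs, abs_of_nonneg (by linarith),
        abs_of_nonneg (by linarith)]
      linarith
  apply tendsto_of_tendsto_of_tendsto_of_le_of_le' tendsto_const_nhds upper
  · filter_upwards with k
    apply div_nonneg _ (Nat.cast_nonneg k)
    apply Real.log_nonneg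
    exact_mod_cast Nat.one_le_cast.mpr (hNge k)
  · filter_upwards [eventually_ge_atTop 1] with k hk
    have hkpos : (0:ℝ) < (k:ℝ) := by exact_mod_cast Nat.pos_of_ne_zero (by omega)
    have hlog : Real.log (Ncard lam x k) ≤ Real.log A + Real.log ((k:ℝ)+1) := by
      rw [← Real.log_mul hApos.ne' (by positivity : ((k:ℝ)+1) ≠ 0)]
      apply Real.log_le_log (by exact_mod_cast hNge k)
      exact hNA k
    gcongr
end
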